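/- arXiv:math/0408347 — 3 statements merged into one kernel-verified Lean document; each statement's English description precedes it below -/
import Mathlib

section
/- Under the hypotheses of the previous lemma, for every s ∈ [0,1] one has 0 ≤ s·l − d(x₀, c(s·l)) < ε and |d(x₀, γ(s·d(x₀,x₁))) − d(x₀, c(s·l))| < 2ε. -/
open Metric Filter Topology Set

noncomputable section

variable {X : Type*} [MetricSpace X]

/-- A unit-speed geodesic ray (parametrized on `[0, ∞)`). -/
def IsRay (γ : ℝ → X) : Prop :=
  ∀ ⦃s t : ℝ⦄, 0 ≤ s → 0 ≤ t → dist (γ s) (γ t) = |s - t|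

/-- Two rays are asymptotic: their pointwise distance is uniformly bounded. -/
def Asymp (γ σ : ℝ → X) : Prop :=
  ∃ C : ℝ, ∀ t : ℝ, 0 ≤ t → dist (γ t) (σ t) ≤ C

/-- A unit-speed minimizing geodesic from `x` to `y`, parametrized on `[0, dist x y]`. -/
def IsMinGeodesic (γ : ℝ → X) (x y : X) : Prop :=
  γ 0 = x ∧ γ (dist x y) = y ∧
    ∀ ⦃s t : ℝ⦄, s ∈ Set.Icc 0 (dist x y) → t ∈ Set.Icc 0 (dist x y) →
      dist (γ s) (γ t) = |s - t|

/-- Every pair of points is joined by a minimizing geodesic. -/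
def GeodesicSpace (X : Type*) [MetricSpace X] : Prop :=
  ∀ x y : X, ∃ γ : ℝ → X, IsMinGeodesic γ x y

/-- CAT(0): geodesic and satisfying the CN (Bruhat–Tits) inequality. -/
def IsCAT0 (X : Type*) [MetricSpace X] : Prop :=
  GeodesicSpace X ∧
    ∀ p q r m : X, dist q m = dist q r / 2 → dist m r = dist q r / 2 →
      dist p m ^ 2 ≤ (dist p q ^ 2 + dist p r ^ 2) / 2 - dist q r ^ 2 / 4

/-- A function convex along every minimizing geodesic. -/
def ConvexFun (F : X → ℝ) : Prop :=
  ∀ (x y : X) (γ : ℝ → X), IsMinGeodesic γ x y →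
    ConvexOn ℝ (Set.Icc 0 (dist x y)) (F ∘ γ)

/-- Euclidean comparison angle at `p` of the points `x`, `y`. -/
def compAngle (p x y : X) : ℝ :=
  Real.arccos ((dist p x ^ 2 + dist p y ^ 2 - dist x y ^ 2) / (2 * dist p x * dist p y))

/-- The (upper) angle at `p` between two curves emanating from `p`. -/
def angleAt (p : X) (γ σ : ℝ → X) : ℝ :=
  sInf {θ : ℝ | ∃ δ : ℝ, 0 < δ ∧
    θ = sSup {θ' : ℝ | ∃ s t : ℝ, s ∈ Set.Ioc 0 δ ∧ t ∈ Set.Ioc 0 δ ∧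
      θ' = compAngle p (γ s) (σ t)}}

/-- A unit-speed geodesic of length `ℓ` emanating from `p` (a direction at `p`). -/
def UnitGeodFrom (p : X) (γ : ℝ → X) (ℓ : ℝ) : Prop :=
  0 < ℓ ∧ γ 0 = p ∧
    ∀ ⦃s t : ℝ⦄, s ∈ Set.Icc 0 ℓ → t ∈ Set.Icc 0 ℓ → dist (γ s) (γ t) = |s - t|

/-- Intrinsic (angular) distance on the unit sphere of `ℝ³`. -/
def sdist (x y : EuclideanSpace ℝ (Fin 3)) : ℝ := Real.arccos (inner ℝ x y)

/-- CAT(1): points at distance < π are joined by geodesics, and geodesic triangles of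
perimeter < 2π satisfy comparison with triangles in the unit 2-sphere. -/
def IsCAT1 (Y : Type*) [MetricSpace Y] : Prop :=
  (∀ x y : Y, dist x y < Real.pi → ∃ γ : ℝ → Y, IsMinGeodesic γ x y) ∧
    ∀ (p q r : Y) (γ : ℝ → Y), IsMinGeodesic γ q r →
      dist p q + dist q r + dist r p < 2 * Real.pi →
      ∃ p' q' r' : EuclideanSpace ℝ (Fin 3), ‖p'‖ = 1 ∧ ‖q'‖ = 1 ∧ ‖r'‖ = 1 ∧
        sdist p' q' = dist p q ∧ sdist q' r' = dist q r ∧ sdist r' p' = dist r p ∧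
        ∀ t ∈ Set.Icc (0:ℝ) (dist q r), ∀ x' : EuclideanSpace ℝ (Fin 3), ‖x'‖ = 1 →
          sdist q' x' = t → sdist x' r' = dist q r - t → dist p (γ t) ≤ sdist p' x'

/-- Covering dimension ≤ n: every open cover has an open refinement of order ≤ n+1. -/
def CovDimLE (Y : Type*) [TopologicalSpace Y] (n : ℕ) : Prop :=
  ∀ U : Set (Set Y), (∀ u ∈ U, IsOpen u) → ⋃₀ U = Set.univ →
    ∃ V : Set (Set Y), (∀ v ∈ V, IsOpen v) ∧ ⋃₀ V = Set.univ ∧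
      (∀ v ∈ V, ∃ u ∈ U, v ⊆ u) ∧
      ∀ x : Y, {v ∈ V | x ∈ v}.Finite ∧ {v ∈ V | x ∈ v}.ncard ≤ n + 1

/-- Directional derivative of `F` at `p` along the geodesic `γ` (of length `ℓ`) from `p`;
for a convex `F` the difference quotients are monotone, so the limit is the infimum. -/
def dirDeriv (F : X → ℝ) (p : X) (γ : ℝ → X) (ℓ : ℝ) : ℝ :=
  sInf {r : ℝ | ∃ s ∈ Set.Ioc 0 ℓ, r = (F (γ s) - F p) / s}

/-- Busemann function of the ray `γ`; `t ↦ dist p (γ t) - t` is non-increasing, so the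
limit as `t → ∞` is the infimum. -/
def busemann (γ : ℝ → X) (p : X) : ℝ :=
  sInf {r : ℝ | ∃ t : ℝ, 0 ≤ t ∧ r = dist p (γ t) - t}

/-- Compactness of the space of directions `Σ_p X` (sequential total boundedness of
geodesic directions at `p` in the angle metric). -/
def DirCompact (p : X) : Prop :=
  ∀ (γ : ℕ → ℝ → X) (ℓ : ℕ → ℝ), (∀ n, UnitGeodFrom p (γ n) (ℓ n)) →
    ∃ φ : ℕ → ℕ, StrictMono φ ∧
      ∀ ε : ℝ, 0 < ε → ∃ N : ℕ, ∀ m ≥ N, ∀ n ≥ N,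
        angleAt p (γ (φ m)) (γ (φ n)) < ε

/-- The angle metric between ideal points represented by the rays `γ`, `σ`:
the supremum over basepoints `p` of the angle at `p` between the representatives from `p`. -/
def idealAngle (γ σ : ℝ → X) : ℝ :=
  sSup {θ : ℝ | ∃ (p : X) (γ' σ' : ℝ → X), IsRay γ' ∧ IsRay σ' ∧ γ' 0 = p ∧ σ' 0 = p ∧
    Asymp γ' γ ∧ Asymp σ' σ ∧ θ = angleAt p γ' σ'}

/-- The radius of a subset `A` of a metric space. -/
def setRadius {B : Type*} [MetricSpace B] (A : Set B) : ℝ :=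
  ⨅ x : A, ⨆ y : A, dist (x : B) (y : B)

/-- The set of centers of `A` (points of `A` realizing the radius). -/
def centersIn {B : Type*} [MetricSpace B] (A : Set B) : Set B :=
  {x | x ∈ A ∧ (⨆ y : A, dist x (y : B)) = setRadius A}

/-- The fixed point set of an isometry `f` in the ideal boundary `B` (with class map `cls`). -/
def FixedAtInfinity {X B : Type*} [MetricSpace X] (f : X → X) (cls : (ℝ → X) → B) : Set B :=
  {b | ∃ γ : ℝ → X, IsRay γ ∧ cls γ = b ∧ Asymp (f ∘ γ) γ}

end

/-! Both `dist x₀ (c (s l))` and `dist x₀ (γ (s d)) = s d`, where `d = dist x₀ x₁`, lie in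
`(s l - ε, s l]`: for a `1`-Lipschitz curve the defect `t - dist (c 0) (c t)` is nonnegative and,
by the triangle inequality through `c t`, at most the total defect `l - d < ε`; and
`s l - s d = s (l - d) ≤ l - d`. -/

theorem LipschitzOnWith.dist_le_sub_of_le {α : Type*} [PseudoMetricSpace α] {f : ℝ → α}
    {s : Set ℝ} (hf : LipschitzOnWith 1 f s) {a b : ℝ} (ha : a ∈ s) (hb : b ∈ s) (hab : a ≤ b) :
    dist (f a) (f b) ≤ b - a := by
  simpa only [NNReal.coe_one, one_mul, Real.dist_eq, abs_sub_comm a b,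
    abs_of_nonneg (sub_nonneg.2 hab)] using hf.dist_le_mul a ha b hb

theorem LipschitzOnWith.sub_sub_dist_le {α : Type*} [PseudoMetricSpace α] {f : ℝ → α}
    {a b t : ℝ} (hf : LipschitzOnWith 1 f (Icc a b)) (ht : t ∈ Icc a b) :
    t - a - dist (f a) (f t) ≤ b - a - dist (f a) (f b) := by
  have hb : b ∈ Icc a b := ⟨ht.1.trans ht.2, le_rfl⟩
  have := hf.dist_le_sub_of_le ht hb ht.2
  linarith [dist_triangle (f a) (f t) (f b)]

theorem IsMinGeodesic.dist_left {X : Type*} [MetricSpace X] {γ : ℝ → X} {x y : X}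
    (hγ : IsMinGeodesic γ x y) {t : ℝ} (ht : t ∈ Icc 0 (dist x y)) : dist x (γ t) = t := by
  obtain ⟨hγ0, -, hγiso⟩ := hγ
  rw [← hγ0, hγiso ⟨le_rfl, dist_nonneg⟩ ht, zero_sub, abs_neg, abs_of_nonneg ht.1]

theorem stmt1_general {Y : Type*} [MetricSpace Y] (l ε : ℝ) (hl0 : 0 ≤ l)
    (c : ℝ → Y) (x₀ x₁ : Y) (hc : LipschitzOnWith 1 c (Set.Icc 0 l))
    (hc0 : c 0 = x₀) (hc1 : c l = x₁) (hl : l < dist x₀ x₁ + ε)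
    (γ : ℝ → Y) (hγ : IsMinGeodesic γ x₀ x₁) :
    ∀ s ∈ Set.Icc (0:ℝ) 1,
      0 ≤ s * l - dist x₀ (c (s * l)) ∧ s * l - dist x₀ (c (s * l)) < ε ∧
      |dist x₀ (γ (s * dist x₀ x₁)) - dist x₀ (c (s * l))| < 2 * ε := by
  rintro s ⟨hs0, hs1⟩
  have hsl : s * l ∈ Icc 0 l := ⟨mul_nonneg hs0 hl0, mul_le_of_le_one_left hl0 hs1⟩
  have hcsl : dist x₀ (c (s * l)) ≤ s * l := by
    simpa only [hc0, sub_zero] using hc.dist_le_sub_of_le ⟨le_rfl, hl0⟩ hsl hsl.1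
  have hdefect : s * l - dist x₀ (c (s * l)) ≤ l - dist x₀ x₁ := by
    simpa only [hc0, hc1, sub_zero] using hc.sub_sub_dist_le hsl
  have hx₀x₁ : dist x₀ x₁ ≤ l := by
    simpa only [hc0, hc1, sub_zero] using hc.dist_le_sub_of_le ⟨le_rfl, hl0⟩ ⟨hl0, le_rfl⟩ hl0
  have hγs : dist x₀ (γ (s * dist x₀ x₁)) = s * dist x₀ x₁ :=
    hγ.dist_left ⟨mul_nonneg hs0 dist_nonneg, mul_le_of_le_one_left dist_nonneg hs1⟩
  have hscaled : s * l - s * dist x₀ x₁ ≤ l - dist x₀ x₁ := by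
    rw [← mul_sub]
    exact mul_le_of_le_one_left (sub_nonneg.2 hx₀x₁) hs1
  have hsd : s * dist x₀ x₁ ≤ s * l := mul_le_mul_of_nonneg_left hx₀x₁ hs0
  refine ⟨sub_nonneg.2 hcsl, by linarith, ?_⟩
  rw [hγs, abs_sub_lt_iff]
  constructor <;> linarith

/-- Intermediate estimates in the proof of Lemma 5.6. -/
theorem stmt1 {Y : Type*} [MetricSpace Y] (l ε : ℝ) (hl0 : 0 ≤ l) (hε : 0 < ε)
    (c : ℝ → Y) (x₀ x₁ : Y) (hc : LipschitzOnWith 1 c (Set.Icc 0 l))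
    (hc0 : c 0 = x₀) (hc1 : c l = x₁) (hl : l < dist x₀ x₁ + ε)
    (γ : ℝ → Y) (hγ : IsMinGeodesic γ x₀ x₁) :
    ∀ s ∈ Set.Icc (0:ℝ) 1,
      0 ≤ s * l - dist x₀ (c (s * l)) ∧ s * l - dist x₀ (c (s * l)) < ε ∧
      |dist x₀ (γ (s * dist x₀ x₁)) - dist x₀ (c (s * l))| < 2 * ε :=
  stmt1_general l ε hl0 c x₀ x₁ hc hc0 hc1 hl γ hγ
end

section
/- Let f be an isometry of a complete CAT(0) space X and let d_f(p) = d(p, f(p)) be its displacement function. For a ray γ in X, the point γ(∞) is d_f-monotone if and only if f∘γ is asymptotic to γ. Consequently X_{d_f}(∞) = X_f(∞), the fixed point set of f in the ideal boundary. -/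
open Metric Filter Topology Set

/-- The ideal boundary of `X` as asymptotic classes of rays. -/
def RayBoundary (X : Type*) [MetricSpace X] :=
  Quot (fun γ σ : {γ : ℝ → X // IsRay γ} => Asymp γ.1 σ.1)

/-!
The displacement `d_f` of an isometry of a CAT(0) space is midpoint convex along geodesics:
comparing the midpoint of `[x, y]` with the midpoint of `[x, f y]`, and the latter with the
midpoint of `[f x, f y]`, the CN inequality bounds `d_f` at the midpoint of `[x, y]` by
`(d_f x + d_f y) / 2`. A midpoint convex function on `[0, ∞)` that is bounded above is
non-increasing, since otherwise its increments along an arithmetic progression stay above a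
positive constant. Along a ray `γ`, boundedness of `d_f ∘ γ` is exactly `f ∘ γ` being
asymptotic to `γ`, and a non-increasing `d_f ∘ γ` is bounded by `d_f (γ 0)`.
-/

theorem add_mul_sub_le_of_monotone_sub {u : ℕ → ℝ} (hu : Monotone fun n => u (n + 1) - u n)
    (n : ℕ) : u 0 + n * (u 1 - u 0) ≤ u n := by
  induction n with
  | zero => simp
  | succ n ih =>
    have := hu (Nat.zero_le n)
    push_cast
    linarith

theorem antitoneOn_of_midpoint_convex_of_bddAbove {g : ℝ → ℝ} {c : ℝ}
    (hmid : ∀ a b, c ≤ a → a ≤ b → g ((a + b) / 2) ≤ (g a + g b) / 2)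
    (hbdd : BddAbove (g '' Ici c)) : AntitoneOn g (Ici c) := by
  intro s hs t _ hst
  by_contra! hlt
  obtain ⟨C, hC⟩ := hbdd
  set u : ℕ → ℝ := fun n => g (s + n * (t - s))
  have hu_mem : ∀ n : ℕ, s + n * (t - s) ∈ Ici c := fun n =>
    le_add_of_le_of_nonneg hs (mul_nonneg n.cast_nonneg (sub_nonneg.2 hst))
  have hu_diff : Monotone fun n => u (n + 1) - u n := by
    refine monotone_nat_of_le_succ fun n => ?_
    have hconv := hmid (s + n * (t - s)) (s + (n + 2) * (t - s)) (hu_mem n) (by nlinarith)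
    rw [show (s + n * (t - s) + (s + (n + 2) * (t - s))) / 2 = s + (n + 1) * (t - s) by ring]
      at hconv
    simp only [u]
    push_cast
    rw [show (n : ℝ) + 1 + 1 = n + 2 by ring]
    linarith
  obtain ⟨n, hn⟩ := exists_nat_gt ((C - g s) / (g t - g s))
  have hgrow := add_mul_sub_le_of_monotone_sub hu_diff n
  have hbound : u n ≤ C := hC ⟨_, hu_mem n, rfl⟩
  simp only [u, Nat.cast_zero, Nat.cast_one, zero_mul, add_zero, one_mul, add_sub_cancel]
    at hgrow hbound
  rw [div_lt_iff₀ (sub_pos.2 hlt)] at hn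
  linarith

section

variable {X : Type*} [MetricSpace X]

theorem GeodesicSpace.exists_midpoint (hX : GeodesicSpace X) (x y : X) :
    ∃ m, dist x m = dist x y / 2 ∧ dist m y = dist x y / 2 := by
  obtain ⟨σ, hσ0, hσ1, hσ⟩ := hX x y
  have hD := @dist_nonneg _ _ x y
  have hhalf : dist x y / 2 ∈ Icc 0 (dist x y) := ⟨by linarith, by linarith⟩
  refine ⟨σ (dist x y / 2), ?_, ?_⟩
  · have := hσ ⟨le_rfl, hD⟩ hhalf
    rw [hσ0, abs_of_nonpos (by linarith)] at this
    linarith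
  · have := hσ hhalf ⟨hD, le_rfl⟩
    rw [hσ1, abs_of_nonpos (by linarith)] at this
    linarith

/-- In the triangle `p q r`, the midpoints of the sides `[q, r]` and `[q, p]` are at distance
at most half the length of the third side. -/
theorem IsCAT0.dist_midpoints_le (hX : IsCAT0 X) {p q r m m' : X}
    (hqm : dist q m = dist q r / 2) (hmr : dist m r = dist q r / 2)
    (hqm' : dist q m' = dist q p / 2) (hm'p : dist m' p = dist q p / 2) :
    dist m m' ≤ dist p r / 2 := by
  have h₁ := hX.2 p q r m hqm hmr
  have h₂ := hX.2 m q p m' hqm' hm'p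
  rw [dist_comm m q, hqm, dist_comm m p, dist_comm q p] at h₂
  have hsq : dist m m' ^ 2 ≤ (dist p r / 2) ^ 2 := by nlinarith
  exact (abs_le_of_sq_le_sq' hsq (by positivity)).2

theorem IsCAT0.dist_isometry_midpoint_le (hX : IsCAT0 X) {f : X → X} (hf : Isometry f)
    {x y m : X} (hxm : dist x m = dist x y / 2) (hmy : dist m y = dist x y / 2) :
    dist m (f m) ≤ (dist x (f x) + dist y (f y)) / 2 := by
  obtain ⟨n, hxn, hny⟩ := hX.1.exists_midpoint x (f y)
  have hn_m : dist n m ≤ dist y (f y) / 2 :=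
    hX.dist_midpoints_le hxn hny hxm hmy
  have hn_fm : dist n (f m) ≤ dist (f x) x / 2 := by
    refine hX.dist_midpoints_le (q := f y) ?_ ?_ ?_ ?_
    · rw [dist_comm, hny, dist_comm x]
    · rw [dist_comm, hxn, dist_comm x]
    · rw [hf.dist_eq, hf.dist_eq, dist_comm, hmy, dist_comm]
    · rw [hf.dist_eq, hf.dist_eq, dist_comm, hxm, dist_comm]
  calc dist m (f m) ≤ dist n m + dist n (f m) := dist_triangle_left _ _ _
    _ ≤ (dist x (f x) + dist y (f y)) / 2 := by
      rw [dist_comm (f x)] at hn_fm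
      linarith

namespace IsRay

variable {γ : ℝ → X}

theorem dist_midpoint_left (hγ : IsRay γ) {a b : ℝ} (ha : 0 ≤ a) (hab : a ≤ b) :
    dist (γ a) (γ ((a + b) / 2)) = dist (γ a) (γ b) / 2 := by
  rw [hγ ha (by linarith), hγ ha (by linarith), abs_of_nonpos (by linarith),
    abs_of_nonpos (by linarith)]
  ring

theorem dist_midpoint_right (hγ : IsRay γ) {a b : ℝ} (ha : 0 ≤ a) (hab : a ≤ b) :
    dist (γ ((a + b) / 2)) (γ b) = dist (γ a) (γ b) / 2 := by
  rw [hγ (by linarith) (by linarith), hγ ha (by linarith), abs_of_nonpos (by linarith),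
    abs_of_nonpos (by linarith)]
  ring

theorem antitoneOn_dist_isometry_iff_asymp (hX : IsCAT0 X) {f : X → X} (hf : Isometry f)
    (hγ : IsRay γ) :
    AntitoneOn (fun t => dist (γ t) (f (γ t))) (Ici 0) ↔ Asymp (f ∘ γ) γ := by
  constructor
  · intro h
    refine ⟨dist (γ 0) (f (γ 0)), fun t ht => ?_⟩
    rw [Function.comp_apply, dist_comm]
    exact h self_mem_Ici ht ht
  · rintro ⟨C, hC⟩
    refine antitoneOn_of_midpoint_convex_of_bddAbove (fun a b ha hab => ?_) ⟨C, ?_⟩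
    · exact hX.dist_isometry_midpoint_le hf (hγ.dist_midpoint_left ha hab)
        (hγ.dist_midpoint_right ha hab)
    · rintro _ ⟨t, ht, rfl⟩
      exact (dist_comm _ _).trans_le (hC t ht)

end IsRay

end

theorem stmt9_general {X : Type*} [MetricSpace X] (hX : IsCAT0 X)
    (f : X → X) (hf : Isometry f) :
    (∀ γ : ℝ → X, IsRay γ →
      (AntitoneOn (fun t => dist (γ t) (f (γ t))) (Set.Ici 0) ↔ Asymp (f ∘ γ) γ)) ∧
    {x : RayBoundary X | ∃ g : {γ : ℝ → X // IsRay γ},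
        Quot.mk _ g = x ∧ AntitoneOn (fun t => dist (g.1 t) (f (g.1 t))) (Set.Ici 0)} =
      {x : RayBoundary X | ∃ g : {γ : ℝ → X // IsRay γ},
        Quot.mk _ g = x ∧ Asymp (f ∘ g.1) g.1} := by
  refine ⟨fun γ hγ => hγ.antitoneOn_dist_isometry_iff_asymp hX hf, ?_⟩
  ext x
  exact exists_congr fun g => and_congr_right' (g.2.antitoneOn_dist_isometry_iff_asymp hX hf)

/-- For an isometry `f`, a ray's ideal point is `d_f`-monotone iff `f ∘ γ` is asymptotic
to `γ`; consequently the `d_f`-monotone set equals the fixed point set of `f` at infinity. -/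
theorem stmt9 {X : Type*} [MetricSpace X] [CompleteSpace X] (hX : IsCAT0 X)
    (f : X → X) (hf : Isometry f) (hfsurj : Function.Surjective f) :
    (∀ γ : ℝ → X, IsRay γ →
      (AntitoneOn (fun t => dist (γ t) (f (γ t))) (Set.Ici 0) ↔ Asymp (f ∘ γ) γ)) ∧
    {x : RayBoundary X | ∃ g : {γ : ℝ → X // IsRay γ},
        Quot.mk _ g = x ∧ AntitoneOn (fun t => dist (g.1 t) (f (g.1 t))) (Set.Ici 0)} =
      {x : RayBoundary X | ∃ g : {γ : ℝ → X // IsRay γ},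
        Quot.mk _ g = x ∧ Asymp (f ∘ g.1) g.1} :=
  stmt9_general hX f hf
end

section
/- Let X be a complete CAT(0) space, F : X → ℝ a locally Lipschitz convex function, and p a non-critical point of F such that Σ_p X is compact. Let u_p ∈ Σ_p X be the unique direction minimizing D_p F on Σ_p X (the gradient direction of −F). Then for every v ∈ Σ_p X, D_p F(v) ≥ −|grad_p(−F)| cos∠_p(u_p, v), where |grad_p(−F)| = −D_p F(u_p). -/
open Metric Filter Topology Set

/-! Let `d = D_p F(u) ≤ 0`. Minimality of `d` gives the global bound `F x ≥ F p + d · |px|`.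
Take `a = u(δ)`, `b = v(δ)` and the point `m` of the segment `[a, b]` at fraction `t`. The CAT(0)
inequality puts `m` closer to `p` than `δ` by about `t · |ab|² / (2δ)`, and `1 - |ab|² / (2δ²)`
is the cosine of a comparison angle, hence at most `cos ∠_p(u, v)`. Comparing the global bound at
`m` with convexity of `F` along `[a, b]`, dividing by `t δ` and letting first `δ → 0` (so that the
slope of `F` along `u` tends to `d`) and then `t → 0`, yields `D_p F(v) ≥ d · cos ∠_p(u, v)`. -/

open Real

theorem nonpos_of_midpoint_le_of_endpoints {g : ℝ → ℝ} {x y : ℝ} (hxy : x ≤ y)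
    (hc : ContinuousOn g (Icc x y))
    (hm : ∀ s ∈ Icc x y, ∀ s' ∈ Icc x y, g ((s + s') / 2) ≤ (g s + g s') / 2)
    (hx : g x = 0) (hy : g y = 0) {t : ℝ} (ht : t ∈ Icc x y) : g t ≤ 0 := by
  obtain ⟨c, hc_mem, hc_max⟩ := isCompact_Icc.exists_isMaxOn (nonempty_Icc.2 hxy) hc
  suffices g c ≤ 0 from (hc_max ht).trans this
  -- `c` is the midpoint of an endpoint, where `g` vanishes, and a point where `g ≤ g c`
  rcases le_total (c - x) (y - c) with h | h
  · have hmem : 2 * c - x ∈ Icc x y := ⟨by linarith [hc_mem.1], by linarith⟩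
    have hmid := hm x (left_mem_Icc.2 hxy) _ hmem
    rw [show (x + (2 * c - x)) / 2 = c by ring, hx] at hmid
    linarith [isMaxOn_iff.1 hc_max _ hmem]
  · have hmem : 2 * c - y ∈ Icc x y := ⟨by linarith, by linarith [hc_mem.2]⟩
    have hmid := hm _ hmem y (right_mem_Icc.2 hxy)
    rw [show (2 * c - y + y) / 2 = c by ring, hy] at hmid
    linarith [isMaxOn_iff.1 hc_max _ hmem]

theorem convexOn_Icc_of_midpoint {f : ℝ → ℝ} {a b : ℝ} (hc : ContinuousOn f (Icc a b))
    (hm : ∀ x ∈ Icc a b, ∀ y ∈ Icc a b, f ((x + y) / 2) ≤ (f x + f y) / 2) :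
    ConvexOn ℝ (Icc a b) f := by
  refine LinearOrder.convexOn_of_lt (convex_Icc a b) fun x hx y hy hxy α β hα hβ hαβ => ?_
  have hsub : Icc x y ⊆ Icc a b := Icc_subset_Icc hx.1 hy.2
  have hyx : 0 < y - x := sub_pos.2 hxy
  obtain rfl : β = 1 - α := by linarith
  -- `(y - x)` times the excess of `f` over its chord on `[x, y]`
  have key : (y - x) * f (α * x + (1 - α) * y) - ((y - (α * x + (1 - α) * y)) * f x +
      (α * x + (1 - α) * y - x) * f y) ≤ 0 := by
    refine nonpos_of_midpoint_le_of_endpoints (g := fun t => (y - x) * f t -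
      ((y - t) * f x + (t - x) * f y)) hxy.le ?_ ?_ (by ring) (by ring) ⟨by nlinarith, by nlinarith⟩
    · exact ((hc.mono hsub).const_smul (y - x)).sub (by fun_prop)
    · intro s hs s' hs'
      nlinarith [mul_le_mul_of_nonneg_left (hm s (hsub hs) s' (hsub hs')) hyx.le]
  have key' : (y - x) * (f (α * x + (1 - α) * y) - (α * f x + (1 - α) * f y)) ≤ 0 := by
    linear_combination key
  simpa only [smul_eq_mul, sub_nonpos] using nonpos_of_mul_nonpos_right key' hyx

theorem le_of_forall_le_add_mul {x y C : ℝ} (h : ∀ t : ℝ, 0 < t → t ≤ 1 → x ≤ y + C * t) :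
    x ≤ y := by
  refine ge_of_tendsto (f := fun t => y + C * t) (x := 𝓝[>] 0) ?_ ?_
  · exact ((continuous_const.add (continuous_const.mul continuous_id)).tendsto' 0 y
      (by simp)).mono_left nhdsWithin_le_nhds
  · filter_upwards [Ioc_mem_nhdsGT one_pos] with t ht using h t ht.1 ht.2

section Geodesics

variable {X : Type*} [MetricSpace X]

theorem IsMinGeodesic.continuousOn {γ : ℝ → X} {a b : X} (hγ : IsMinGeodesic γ a b) :
    ContinuousOn γ (Icc 0 (dist a b)) :=
  (LipschitzOnWith.of_dist_le_mul (K := 1) fun s hs t ht => by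
    simp [hγ.2.2 hs ht, Real.dist_eq]).continuousOn

theorem IsMinGeodesic.unitGeodFrom {γ : ℝ → X} {x y : X} (hγ : IsMinGeodesic γ x y)
    (hxy : x ≠ y) : UnitGeodFrom x γ (dist x y) :=
  ⟨dist_pos.2 hxy, hγ.1, hγ.2.2⟩

theorem UnitGeodFrom.dist_eq {p : X} {w : ℝ → X} {ℓ : ℝ} (hw : UnitGeodFrom p w ℓ) {t : ℝ}
    (ht0 : 0 ≤ t) (htℓ : t ≤ ℓ) : dist p (w t) = t := by
  rw [← hw.2.1, hw.2.2 (left_mem_Icc.2 hw.1.le) ⟨ht0, htℓ⟩, zero_sub, abs_neg, abs_of_nonneg ht0]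

theorem UnitGeodFrom.isMinGeodesic {p : X} {w : ℝ → X} {ℓ : ℝ} (hw : UnitGeodFrom p w ℓ)
    {t : ℝ} (ht0 : 0 ≤ t) (htℓ : t ≤ ℓ) : IsMinGeodesic w p (w t) := by
  refine ⟨hw.2.1, by rw [hw.dist_eq ht0 htℓ], fun s s' hs hs' => ?_⟩
  rw [hw.dist_eq ht0 htℓ] at hs hs'
  exact hw.2.2 ⟨hs.1, hs.2.trans htℓ⟩ ⟨hs'.1, hs'.2.trans htℓ⟩

theorem IsCAT0.dist_sq_le (hX : IsCAT0 X) {a b : X} {γ : ℝ → X} (hγ : IsMinGeodesic γ a b)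
    (p : X) {t : ℝ} (ht0 : 0 ≤ t) (ht1 : t ≤ 1) :
    dist p (γ (t * dist a b)) ^ 2 ≤
      (1 - t) * dist p a ^ 2 + t * dist p b ^ 2 - t * (1 - t) * dist a b ^ 2 := by
  -- the CN inequality says that `s ↦ |p γ(s)|² - s²` is midpoint convex
  have hconv : ConvexOn ℝ (Icc 0 (dist a b)) fun s => dist p (γ s) ^ 2 - s ^ 2 := by
    refine convexOn_Icc_of_midpoint ?_ fun s hs s' hs' => ?_
    · exact (((continuous_const.dist continuous_id).comp_continuousOn hγ.continuousOn).pow 2).sub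
        (by fun_prop)
    have hmid : (s + s') / 2 ∈ Icc 0 (dist a b) :=
      ⟨by linarith [hs.1, hs'.1], by linarith [hs.2, hs'.2]⟩
    have hcn := hX.2 p (γ s) (γ s') (γ ((s + s') / 2))
      (by rw [hγ.2.2 hs hmid, hγ.2.2 hs hs', show s - (s + s') / 2 = (s - s') / 2 by ring,
        abs_div, abs_two])
      (by rw [hγ.2.2 hmid hs', hγ.2.2 hs hs', show (s + s') / 2 - s' = (s - s') / 2 by ring,
        abs_div, abs_two])
    rw [hγ.2.2 hs hs', sq_abs] at hcn
    linear_combination hcn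
  have h := hconv.2 (left_mem_Icc.2 dist_nonneg) (right_mem_Icc.2 dist_nonneg) (sub_nonneg.2 ht1)
    ht0 (sub_add_cancel 1 t)
  simp only [smul_eq_mul, mul_zero, zero_add, hγ.1, hγ.2.1] at h
  linear_combination h

theorem dist_le_two_mul_of_dist_eq {p a b : X} {δ : ℝ} (ha : dist p a = δ) (hb : dist p b = δ) :
    dist a b ≤ 2 * δ :=
  (dist_triangle_left a b p).trans (by rw [ha, hb]; linarith)

theorem dist_sq_div_le_two {p a b : X} {δ : ℝ} (hδ : 0 < δ) (ha : dist p a = δ)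
    (hb : dist p b = δ) : dist a b ^ 2 / (2 * δ ^ 2) ≤ 2 := by
  have hD := dist_le_two_mul_of_dist_eq ha hb
  rw [div_le_iff₀ (by positivity)]
  nlinarith [mul_le_mul hD hD dist_nonneg (by positivity)]

theorem IsCAT0.dist_le_of_dist_eq (hX : IsCAT0 X) {p a b : X} {γ : ℝ → X}
    (hγ : IsMinGeodesic γ a b) {δ : ℝ} (hδ : 0 < δ) (ha : dist p a = δ) (hb : dist p b = δ)
    {t : ℝ} (ht0 : 0 ≤ t) (ht1 : t ≤ 1) :
    dist p (γ (t * dist a b)) ≤ δ - t * (1 - t) * dist a b ^ 2 / (2 * δ) := by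
  have hD := dist_le_two_mul_of_dist_eq ha hb
  have hq := hX.dist_sq_le hγ p ht0 ht1
  rw [ha, hb] at hq
  have he : 2 * δ * (t * (1 - t) * dist a b ^ 2 / (2 * δ)) = t * (1 - t) * dist a b ^ 2 :=
    mul_div_cancel₀ _ (by positivity)
  have hpos : 0 ≤ δ - t * (1 - t) * dist a b ^ 2 / (2 * δ) := by
    rw [sub_nonneg, div_le_iff₀ (by positivity)]
    nlinarith [sq_nonneg (t - 1 / 2), mul_le_mul hD hD dist_nonneg (by positivity),
      mul_nonneg ht0 (sub_nonneg.2 ht1), sq_nonneg (dist a b)]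
  refine (pow_le_pow_iff_left₀ dist_nonneg hpos two_ne_zero).1 ?_
  nlinarith [sq_nonneg (t * (1 - t) * dist a b ^ 2 / (2 * δ))]

end Geodesics

section ConvexFunctions

variable {X : Type*} [MetricSpace X] {F : X → ℝ} {p : X} {w : ℝ → X} {ℓ : ℝ}

theorem ConvexFun.convexOn_of_unitGeodFrom (hF : ConvexFun F) (hw : UnitGeodFrom p w ℓ) :
    ConvexOn ℝ (Icc 0 ℓ) (F ∘ w) := by
  simpa only [hw.dist_eq hw.1.le le_rfl] using hF p (w ℓ) w (hw.isMinGeodesic hw.1.le le_rfl)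

theorem ConvexFun.diffQuot_mono (hF : ConvexFun F) (hw : UnitGeodFrom p w ℓ) {s t : ℝ}
    (hs : 0 < s) (hst : s ≤ t) (ht : t ≤ ℓ) :
    (F (w s) - F p) / s ≤ (F (w t) - F p) / t := by
  have h := (hF.convexOn_of_unitGeodFrom hw).secant_mono (left_mem_Icc.2 hw.1.le)
    ⟨hs.le, hst.trans ht⟩ ⟨hs.le.trans hst, ht⟩ hs.ne' (hs.trans_le hst).ne' hst
  simpa only [Function.comp_apply, hw.2.1, sub_zero] using h

theorem ConvexFun.neg_le_diffQuot (hF : ConvexFun F) (hw : UnitGeodFrom p w ℓ) {K : NNReal}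
    {r : ℝ} (hr : 0 < r) (hK : LipschitzOnWith K F (ball p r)) {s : ℝ} (hs : s ∈ Ioc 0 ℓ) :
    -(K : ℝ) ≤ (F (w s) - F p) / s := by
  set s' := min s (r / 2)
  have hs' : 0 < s' := lt_min hs.1 (half_pos hr)
  have hdist : dist p (w s') = s' := hw.dist_eq hs'.le ((min_le_left _ _).trans hs.2)
  have hmem : w s' ∈ ball p r := by
    rw [mem_ball, dist_comm, hdist]
    exact (min_le_right _ _).trans_lt (half_lt_self hr)
  have hlip := hK.dist_le_mul _ hmem _ (mem_ball_self hr)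
  rw [dist_comm (w s') p, hdist, Real.dist_eq] at hlip
  calc -(K : ℝ) ≤ (F (w s') - F p) / s' := by
        rw [le_div_iff₀ hs']
        linarith [neg_abs_le (F (w s') - F p)]
    _ ≤ (F (w s) - F p) / s := hF.diffQuot_mono hw hs' (min_le_left _ _) hs.2

theorem ConvexFun.dirDeriv_le_diffQuot (hF : ConvexFun F) (hw : UnitGeodFrom p w ℓ)
    {K : NNReal} {r : ℝ} (hr : 0 < r) (hK : LipschitzOnWith K F (ball p r)) {s : ℝ}
    (hs : s ∈ Ioc 0 ℓ) : dirDeriv F p w ℓ ≤ (F (w s) - F p) / s :=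
  csInf_le ⟨-(K : ℝ), by rintro _ ⟨s', hs', rfl⟩; exact hF.neg_le_diffQuot hw hr hK hs'⟩
    ⟨s, hs, rfl⟩

theorem ConvexFun.exists_diffQuot_lt (hF : ConvexFun F) (hw : UnitGeodFrom p w ℓ) {ε : ℝ}
    (hε : 0 < ε) {s : ℝ} (hs : s ∈ Ioc 0 ℓ) :
    ∃ δ ∈ Ioc 0 s, (F (w δ) - F p) / δ < dirDeriv F p w ℓ + ε := by
  have hne : {q : ℝ | ∃ s' ∈ Ioc 0 ℓ, q = (F (w s') - F p) / s'}.Nonempty := ⟨_, s, hs, rfl⟩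
  obtain ⟨_, ⟨t, ht, rfl⟩, hlt⟩ :=
    exists_lt_of_csInf_lt hne (lt_add_of_pos_right (dirDeriv F p w ℓ) hε)
  have hst : 0 < min s t := lt_min hs.1 ht.1
  exact ⟨min s t, ⟨hst, min_le_left _ _⟩,
    (hF.diffQuot_mono hw hst (min_le_right _ _) ht.2).trans_lt hlt⟩

theorem ConvexFun.add_mul_dist_le (hX : GeodesicSpace X) (hF : ConvexFun F) {K : NNReal}
    {r : ℝ} (hr : 0 < r) (hK : LipschitzOnWith K F (ball p r)) {d : ℝ}
    (hd : ∀ (w : ℝ → X) (ℓ : ℝ), UnitGeodFrom p w ℓ → d ≤ dirDeriv F p w ℓ) (x : X) :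
    F p + d * dist p x ≤ F x := by
  rcases eq_or_ne p x with rfl | hpx
  · simp
  obtain ⟨γ, hγ⟩ := hX p x
  have hγ' := hγ.unitGeodFrom hpx
  have h := (hd γ _ hγ').trans (hF.dirDeriv_le_diffQuot hγ' hr hK ⟨hγ'.1, le_rfl⟩)
  rw [hγ.2.1, le_div_iff₀ hγ'.1] at h
  linarith

theorem IsCAT0.add_mul_le_chord (hX : IsCAT0 X) (hF : ConvexFun F) {d : ℝ} (hd : d ≤ 0)
    (hlb : ∀ x, F p + d * dist p x ≤ F x) {a b : X} {δ : ℝ} (hδ : 0 < δ) (ha : dist p a = δ)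
    (hb : dist p b = δ) {t : ℝ} (ht0 : 0 ≤ t) (ht1 : t ≤ 1) :
    F p + d * (δ - t * (1 - t) * dist a b ^ 2 / (2 * δ)) ≤ (1 - t) * F a + t * F b := by
  obtain ⟨γ, hγ⟩ := hX.1 a b
  have hconv := (hF a b γ hγ).2 (left_mem_Icc.2 dist_nonneg) (right_mem_Icc.2 dist_nonneg)
    (sub_nonneg.2 ht1) ht0 (sub_add_cancel 1 t)
  simp only [smul_eq_mul, mul_zero, zero_add, Function.comp_apply, hγ.1, hγ.2.1] at hconv
  calc F p + d * (δ - t * (1 - t) * dist a b ^ 2 / (2 * δ))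
      ≤ F p + d * dist p (γ (t * dist a b)) :=
        add_le_add_right
          (mul_le_mul_of_nonpos_left (hX.dist_le_of_dist_eq hγ hδ ha hb ht0 ht1) hd) _
    _ ≤ F (γ (t * dist a b)) := hlb _
    _ ≤ (1 - t) * F a + t * F b := hconv

end ConvexFunctions

section Angles

variable {X : Type*} [MetricSpace X] {p : X} {u v w : ℝ → X} {ℓ ℓu ℓv : ℝ}

theorem compAngle_comm (p x y : X) : compAngle p x y = compAngle p y x := by
  rw [compAngle, compAngle, dist_comm y x, add_comm (dist p x ^ 2), mul_right_comm 2]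

theorem IsCAT0.compAngle_mono (hX : IsCAT0 X) (hw : UnitGeodFrom p w ℓ) {s t : ℝ}
    (hs : 0 < s) (hst : s ≤ t) (ht : t ≤ ℓ) {y : X} (hy : 0 < dist p y) :
    compAngle p (w s) y ≤ compAngle p (w t) y := by
  have ht0 : 0 < t := hs.trans_le hst
  have hq := hX.dist_sq_le (hw.isMinGeodesic ht0.le ht) y (div_nonneg hs.le ht0.le)
    ((div_le_one ht0).2 hst)
  rw [hw.dist_eq ht0.le ht, div_mul_cancel₀ _ ht0.ne', dist_comm y p, dist_comm y (w t),
    dist_comm y (w s)] at hq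
  have hq' : t * dist (w s) y ^ 2 ≤
      (t - s) * dist p y ^ 2 + s * dist (w t) y ^ 2 - s * (t - s) * t := by
    have h := mul_le_mul_of_nonneg_left hq ht0.le
    field_simp at h
    linear_combination h
  rw [compAngle, compAngle, hw.dist_eq ht0.le ht, hw.dist_eq hs.le (hst.trans ht)]
  refine Real.arccos_le_arccos ?_
  rw [div_le_div_iff₀ (by positivity) (by positivity)]
  nlinarith [mul_le_mul_of_nonneg_left hq' (by positivity : (0 : ℝ) ≤ 2 * dist p y)]

theorem sSup_compAngle_nonneg (p : X) (u v : ℝ → X) (δ : ℝ) :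
    0 ≤ sSup {θ : ℝ | ∃ s t : ℝ, s ∈ Ioc 0 δ ∧ t ∈ Ioc 0 δ ∧ θ = compAngle p (u s) (v t)} :=
  Real.sSup_nonneg fun _ ⟨_, _, _, _, h⟩ => h ▸ arccos_nonneg _

theorem angleAt_nonneg (p : X) (u v : ℝ → X) : 0 ≤ angleAt p u v :=
  le_csInf ⟨_, 1, one_pos, rfl⟩ fun _ ⟨δ, _, h⟩ => h ▸ sSup_compAngle_nonneg p u v δ

theorem IsCAT0.angleAt_le_compAngle (hX : IsCAT0 X) (hu : UnitGeodFrom p u ℓu)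
    (hv : UnitGeodFrom p v ℓv) {δ : ℝ} (hδ : 0 < δ) (hδu : δ ≤ ℓu) (hδv : δ ≤ ℓv) :
    angleAt p u v ≤ compAngle p (u δ) (v δ) := by
  refine le_trans (b := sSup {θ : ℝ | ∃ s t : ℝ, s ∈ Ioc 0 δ ∧ t ∈ Ioc 0 δ ∧
      θ = compAngle p (u s) (v t)})
    (csInf_le ⟨0, fun _ ⟨δ', _, h⟩ => h ▸ sSup_compAngle_nonneg p u v δ'⟩ ⟨δ, hδ, rfl⟩)
    (csSup_le ⟨_, δ, δ, ⟨hδ, le_rfl⟩, ⟨hδ, le_rfl⟩, rfl⟩ ?_)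
  rintro _ ⟨s, t, hs, ht, rfl⟩
  calc compAngle p (u s) (v t)
      ≤ compAngle p (u δ) (v t) := hX.compAngle_mono hu hs.1 hs.2 hδu
        (by rw [hv.dist_eq ht.1.le (ht.2.trans hδv)]; exact ht.1)
    _ = compAngle p (v t) (u δ) := compAngle_comm _ _ _
    _ ≤ compAngle p (v δ) (u δ) := hX.compAngle_mono hv ht.1 ht.2 hδv
        (by rw [hu.dist_eq hδ.le hδu]; exact hδ)
    _ = compAngle p (u δ) (v δ) := compAngle_comm _ _ _

theorem IsCAT0.one_sub_le_cos_angleAt (hX : IsCAT0 X) (hu : UnitGeodFrom p u ℓu)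
    (hv : UnitGeodFrom p v ℓv) {δ : ℝ} (hδ : 0 < δ) (hδu : δ ≤ ℓu) (hδv : δ ≤ ℓv) :
    1 - dist (u δ) (v δ) ^ 2 / (2 * δ ^ 2) ≤ cos (angleAt p u v) := by
  have hpu := hu.dist_eq hδ.le hδu
  have hpv := hv.dist_eq hδ.le hδv
  have hc : compAngle p (u δ) (v δ) = arccos (1 - dist (u δ) (v δ) ^ 2 / (2 * δ ^ 2)) := by
    rw [compAngle, hpu, hpv]
    congr 1
    field_simp
    ring
  have hlo : -1 ≤ 1 - dist (u δ) (v δ) ^ 2 / (2 * δ ^ 2) := by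
    linarith [dist_sq_div_le_two hδ hpu hpv]
  have hhi : 1 - dist (u δ) (v δ) ^ 2 / (2 * δ ^ 2) ≤ 1 := sub_le_self _ (by positivity)
  calc 1 - dist (u δ) (v δ) ^ 2 / (2 * δ ^ 2) = cos (compAngle p (u δ) (v δ)) := by
        rw [hc, cos_arccos hlo hhi]
    _ ≤ cos (angleAt p u v) := cos_le_cos_of_nonneg_of_le_pi (angleAt_nonneg p u v)
        (arccos_le_pi _) (hX.angleAt_le_compAngle hu hv hδ hδu hδv)

end Angles

theorem IsCAT0.diffQuot_ge {X : Type*} [MetricSpace X] (hX : IsCAT0 X) {F : X → ℝ}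
    (hF : ConvexFun F) {p : X} {K : NNReal} {r : ℝ} (hr : 0 < r)
    (hK : LipschitzOnWith K F (ball p r)) {u v : ℝ → X} {ℓu ℓv : ℝ}
    (hu : UnitGeodFrom p u ℓu) (hv : UnitGeodFrom p v ℓv) (hd : dirDeriv F p u ℓu ≤ 0)
    (hmin : ∀ (w : ℝ → X) (ℓw : ℝ), UnitGeodFrom p w ℓw → dirDeriv F p u ℓu ≤ dirDeriv F p w ℓw)
    {t : ℝ} (ht0 : 0 < t) (ht1 : t ≤ 1) {s : ℝ} (hs : s ∈ Ioc 0 ℓv) :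
    dirDeriv F p u ℓu * cos (angleAt p u v) ≤
      (F (v s) - F p) / s + (1 - 2 * dirDeriv F p u ℓu) * t := by
  set d := dirDeriv F p u ℓu
  -- the slope `A` along `u` is within `t²` of `d`: dividing by `t` below then costs only `O(t)`
  obtain ⟨δ, hδ, hAd⟩ := hF.exists_diffQuot_lt hu (pow_pos ht0 2) (s := min s ℓu)
    ⟨lt_min hs.1 hu.1, min_le_right _ _⟩
  have hδs : δ ≤ s := hδ.2.trans (min_le_left _ _)
  have hδu : δ ≤ ℓu := hδ.2.trans (min_le_right _ _)
  have hδv : δ ≤ ℓv := hδs.trans hs.2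
  set A := (F (u δ) - F p) / δ
  set B := (F (v δ) - F p) / δ
  set κ := dist (u δ) (v δ) ^ 2 / (2 * δ ^ 2) with hκ_def
  have hB : B ≤ (F (v s) - F p) / s := hF.diffQuot_mono hv hδ.1 hδs hs.2
  have hcos : 1 - κ ≤ cos (angleAt p u v) := hX.one_sub_le_cos_angleAt hu hv hδ.1 hδu hδv
  have hκ : κ ≤ 2 := dist_sq_div_le_two hδ.1 (hu.dist_eq hδ.1.le hδu) (hv.dist_eq hδ.1.le hδv)
  have hchord := hX.add_mul_le_chord hF hd (hF.add_mul_dist_le hX.1 hr hK hmin) hδ.1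
    (hu.dist_eq hδ.1.le hδu) (hv.dist_eq hδ.1.le hδv) ht0.le ht1
  have eA : δ * A = F (u δ) - F p := mul_div_cancel₀ _ hδ.1.ne'
  have eB : δ * B = F (v δ) - F p := mul_div_cancel₀ _ hδ.1.ne'
  have eκ : δ * κ = dist (u δ) (v δ) ^ 2 / (2 * δ) := by rw [hκ_def]; field_simp
  clear_value A B κ
  have hchord' : d * (1 - t * (1 - t) * κ) ≤ (1 - t) * A + t * B := by
    refine le_of_mul_le_mul_left ?_ hδ.1
    linear_combination hchord - (1 - t) * eA - t * eB - d * t * (1 - t) * eκ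
  have hB' : d * (1 - κ) + 2 * d * t - t ≤ B := by
    refine le_of_mul_le_mul_left ?_ ht0
    have h1 := mul_le_mul_of_nonneg_left hAd.le (sub_nonneg.2 ht1)
    have h2 := mul_nonneg (sq_nonneg t) (mul_nonneg_of_nonpos_of_nonpos hd (sub_nonpos.2 hκ))
    have h3 := pow_pos ht0 3
    linarith
  linarith [mul_le_mul_of_nonpos_left hcos hd]

theorem stmt12_general {X : Type*} [MetricSpace X] (hX : IsCAT0 X)
    (F : X → ℝ)
    (hlip : ∀ p : X, ∃ (K : NNReal) (r : ℝ), 0 < r ∧ LipschitzOnWith K F (Metric.ball p r))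
    (hF : ConvexFun F)
    (p : X)
    (u : ℝ → X) (ℓu : ℝ) (hu : UnitGeodFrom p u ℓu)
    (hneg : dirDeriv F p u ℓu < 0)
    (hmin : ∀ (w : ℝ → X) (ℓw : ℝ), UnitGeodFrom p w ℓw → dirDeriv F p u ℓu ≤ dirDeriv F p w ℓw) :
    ∀ (v : ℝ → X) (ℓv : ℝ), UnitGeodFrom p v ℓv →
      dirDeriv F p v ℓv ≥ dirDeriv F p u ℓu * Real.cos (angleAt p u v) := by
  intro v ℓv hv
  obtain ⟨K, r, hr, hK⟩ := hlip p
  refine le_csInf ⟨_, ℓv, ⟨hv.1, le_rfl⟩, rfl⟩ ?_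
  rintro _ ⟨s, hs, rfl⟩
  exact le_of_forall_le_add_mul fun t ht0 ht1 =>
    hX.diffQuot_ge hF hr hK hu hv hneg.le hmin ht0 ht1 hs

/-- Lemma 3.4 (first variation inequality for convex functions): at a non-critical point,
`D_p F(v) ≥ -|grad_p(-F)| cos ∠_p(u_p, v)`, where `u_p` is the gradient direction. -/
theorem stmt12 {X : Type*} [MetricSpace X] [CompleteSpace X] (hX : IsCAT0 X)
    (F : X → ℝ)
    (hlip : ∀ p : X, ∃ (K : NNReal) (r : ℝ), 0 < r ∧ LipschitzOnWith K F (Metric.ball p r))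
    (hF : ConvexFun F)
    (p : X) (hcpt : DirCompact p)
    (u : ℝ → X) (ℓu : ℝ) (hu : UnitGeodFrom p u ℓu)
    (hneg : dirDeriv F p u ℓu < 0)
    (hmin : ∀ (w : ℝ → X) (ℓw : ℝ), UnitGeodFrom p w ℓw → dirDeriv F p u ℓu ≤ dirDeriv F p w ℓw) :
    ∀ (v : ℝ → X) (ℓv : ℝ), UnitGeodFrom p v ℓv →
      dirDeriv F p v ℓv ≥ dirDeriv F p u ℓu * Real.cos (angleAt p u v) :=
  stmt12_general hX F hlip hF p u ℓu hu hneg hmin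
end
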